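/- arXiv:2605.22683 — 4 statements merged into one kernel-verified Lean document; each statement's English description precedes it below -/
import Mathlib

section
/- Let S and T be Cu-semigroups (ω-continuous ordered monoids with compatible compact-containment relation) and let α : S → T be a Cu-morphism (monoid map preserving order, suprema of increasing sequences, and the way-below relation ≪). Suppose there is a subset B ⊆ S such that (i) every element of S is the supremum of a ≪-increasing sequence of elements of B, (ii) the restriction of α to B is an order-embedding, and (iii) every element of T is the supremum of a ≪-increasing sequence of elements of α(B). Then α is an order-isomorphism of S onto T. -/
/-- The compact-containment (way-below) relation in an ordered set with suprema of
increasing sequences: `x ≪ y` if every increasing sequence whose supremum dominates `y`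
eventually dominates `x`. -/
def WayBelow {S : Type*} [Preorder S] (x y : S) : Prop :=
  ∀ (t : ℕ → S) (u : S), Monotone t → IsLUB (Set.range t) u → y ≤ u → ∃ n, x ≤ t n


lemma WayBelow.le' {S : Type*} [Preorder S] {x y : S} (h : WayBelow x y) : x ≤ y := by
  obtain ⟨n, hn⟩ := h (fun _ => y) y monotone_const
    ⟨fun a ha => by rcases ha with ⟨m, rfl⟩; exact le_rfl, fun a ha => ha ⟨0, rfl⟩⟩ le_rfl
  exact hn

theorem cu_morphism_dense_embedding_is_iso
    {S T : Type*} [AddCommMonoid S] [PartialOrder S] [AddCommMonoid T] [PartialOrder T]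
    -- S and T are Cu-semigroups:
    (hS0 : ∀ x : S, 0 ≤ x) (hT0 : ∀ x : T, 0 ≤ x)
    (hSadd : ∀ x y z w : S, x ≤ y → z ≤ w → x + z ≤ y + w)
    (hTadd : ∀ x y z w : T, x ≤ y → z ≤ w → x + z ≤ y + w)
    (hSsup : ∀ t : ℕ → S, Monotone t → ∃ u, IsLUB (Set.range t) u)
    (hTsup : ∀ t : ℕ → T, Monotone t → ∃ u, IsLUB (Set.range t) u)
    (hSbasis : ∀ s : S, ∃ t : ℕ → S, (∀ n, WayBelow (t n) (t (n + 1))) ∧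
      IsLUB (Set.range t) s)
    (hTbasis : ∀ s : T, ∃ t : ℕ → T, (∀ n, WayBelow (t n) (t (n + 1))) ∧
      IsLUB (Set.range t) s)
    (hSwbadd : ∀ x y z w : S, WayBelow x y → WayBelow z w → WayBelow (x + z) (y + w))
    (hTwbadd : ∀ x y z w : T, WayBelow x y → WayBelow z w → WayBelow (x + z) (y + w))
    -- α is a Cu-morphism:
    (α : S → T)
    (hα0 : α 0 = 0) (hαadd : ∀ x y : S, α (x + y) = α x + α y)
    (hαmono : Monotone α)
    (hαsup : ∀ (t : ℕ → S) (u : S), Monotone t → IsLUB (Set.range t) u →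
      IsLUB (Set.range fun n => α (t n)) (α u))
    (hαwb : ∀ x y : S, WayBelow x y → WayBelow (α x) (α y))
    -- B ⊆ S with the three conditions:
    (B : Set S)
    (hB : ∀ s : S, ∃ b : ℕ → S, (∀ n, b n ∈ B) ∧ (∀ n, WayBelow (b n) (b (n + 1))) ∧
      IsLUB (Set.range b) s)
    (hemb : ∀ x ∈ B, ∀ y ∈ B, α x ≤ α y ↔ x ≤ y)
    (hαB : ∀ t : T, ∃ b : ℕ → S, (∀ n, b n ∈ B) ∧
      (∀ n, WayBelow (α (b n)) (α (b (n + 1)))) ∧ IsLUB (Set.range fun n => α (b n)) t) :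
    Function.Bijective α ∧ ∀ x y : S, α x ≤ α y ↔ x ≤ y := by
  have hrefl : ∀ x y : S, α x ≤ α y → x ≤ y := by
    intro x y hxy
    obtain ⟨b, hbB, hbwb, hbl⟩ := hB x
    obtain ⟨c, hcB, hcwb, hcl⟩ := hB y
    have hcmono : Monotone c := monotone_nat_of_le_succ fun n => (hcwb n).le'
    have hαcl := hαsup c y hcmono hcl
    have hαcmono : Monotone (fun n => α (c n)) := fun i j h => hαmono (hcmono h)
    have hxley : ∀ n, b n ≤ y := by
      intro n
      have h1 : α (b (n + 1)) ≤ α y := le_trans (hαmono (hbl.1 ⟨n + 1, rfl⟩)) hxy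
      obtain ⟨m, hm⟩ := hαwb _ _ (hbwb n) (fun k => α (c k)) (α y) hαcmono hαcl h1
      exact le_trans ((hemb _ (hbB n) _ (hcB m)).mp hm) (hcl.1 ⟨m, rfl⟩)
    exact hbl.2 fun a ha => by rcases ha with ⟨n, rfl⟩; exact hxley n
  have hsurj : Function.Surjective α := by
    intro t
    obtain ⟨b, hbB, hbwb, hbl⟩ := hαB t
    have hbmono : Monotone b := monotone_nat_of_le_succ fun n =>
      (hemb _ (hbB n) _ (hbB (n + 1))).mp (hbwb n).le'
    obtain ⟨u, hu⟩ := hSsup b hbmono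
    exact ⟨u, (hαsup b u hbmono hu).unique hbl⟩
  refine ⟨⟨fun x y h => le_antisymm (hrefl x y h.le) (hrefl y x h.ge), hsurj⟩,
    fun x y => ⟨hrefl x y, fun h => hαmono h⟩⟩
end

section
/- Let α : S → T be a map between Cu-semigroups that preserves suprema of increasing sequences, and let B ⊆ S be ≪-dense with α|_B an order-embedding and α(B) ≪-dense in T. Then α is surjective. -/
theorem sup_preserving_dense_embedding_surjective
    {S T : Type*} [AddCommMonoid S] [PartialOrder S] [AddCommMonoid T] [PartialOrder T]
    -- S and T are Cu-semigroups:
    (hS0 : ∀ x : S, 0 ≤ x) (hT0 : ∀ x : T, 0 ≤ x)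
    (hSsup : ∀ t : ℕ → S, Monotone t → ∃ u, IsLUB (Set.range t) u)
    (hTsup : ∀ t : ℕ → T, Monotone t → ∃ u, IsLUB (Set.range t) u)
    (hSbasis : ∀ s : S, ∃ t : ℕ → S, (∀ n, WayBelow (t n) (t (n + 1))) ∧
      IsLUB (Set.range t) s)
    (hTbasis : ∀ s : T, ∃ t : ℕ → T, (∀ n, WayBelow (t n) (t (n + 1))) ∧
      IsLUB (Set.range t) s)
    -- α preserves suprema of increasing sequences:
    (α : S → T)
    (hαsup : ∀ (t : ℕ → S) (u : S), Monotone t → IsLUB (Set.range t) u →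
      IsLUB (Set.range fun n => α (t n)) (α u))
    -- B ⊆ S is ≪-dense, α|_B is an order-embedding, α(B) is ≪-dense in T:
    (B : Set S)
    (hB : ∀ s : S, ∃ b : ℕ → S, (∀ n, b n ∈ B) ∧ (∀ n, WayBelow (b n) (b (n + 1))) ∧
      IsLUB (Set.range b) s)
    (hemb : ∀ x ∈ B, ∀ y ∈ B, α x ≤ α y ↔ x ≤ y)
    (hαB : ∀ t : T, ∃ b : ℕ → S, (∀ n, b n ∈ B) ∧
      (∀ n, WayBelow (α (b n)) (α (b (n + 1)))) ∧ IsLUB (Set.range fun n => α (b n)) t) :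
    Function.Surjective α := by
  have wb_le : ∀ {x y : T}, WayBelow x y → x ≤ y := by
    intro x y h
    obtain ⟨n, hn⟩ := h (fun _ => y) y monotone_const
      (by rw [Set.range_const]; exact isLUB_singleton) le_rfl
    exact hn
  intro t
  obtain ⟨b, hbB, hwb, hlub⟩ := hαB t
  have hmonoα : Monotone fun n => α (b n) :=
    monotone_nat_of_le_succ fun n => wb_le (hwb n)
  have hmono : Monotone b :=
    monotone_nat_of_le_succ fun n =>
      (hemb _ (hbB n) _ (hbB (n+1))).mp (hmonoα (Nat.le_succ n))
  obtain ⟨u, hu⟩ := hSsup b hmono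
  exact ⟨u, (hαsup b u hmono hu).unique hlub⟩
end

section
/- Let M be an abelian monoid with a transitive, additive, interpolating relation ≺≺. Define addition on round ideals by I + J := ⋃_{a ∈ I, b ∈ J} (a+b)^{≺≺}, where (x)^{≺≺} = { y : y ≺≺ x }. Then I + J is again a round ideal, and this addition is commutative and associative. -/
/-- A round ideal of a monoid with an auxiliary relation `r`. -/
def IsRoundIdeal {M : Type*} (r : M → M → Prop) (I : Set M) : Prop :=
  I.Nonempty ∧ (∀ a b : M, r a b → b ∈ I → a ∈ I) ∧
    ∀ a ∈ I, ∀ b ∈ I, ∃ c ∈ I, r a c ∧ r b c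

/-- Addition of round ideals: `I + J = ⋃_{a ∈ I, b ∈ J} (a + b)^{≺≺}`. -/
def addRI {M : Type*} [AddCommMonoid M] (r : M → M → Prop) (I J : Set M) : Set M :=
  {y : M | ∃ a ∈ I, ∃ b ∈ J, r y (a + b)}

theorem addRI_round_comm_assoc {M : Type*} [AddCommMonoid M]
    (r : M → M → Prop)
    (htrans : ∀ a b c : M, r a b → r b c → r a c)
    (hadd : ∀ a b c d : M, r a b → r c d → r (a + c) (b + d))
    (hinterp : ∀ a c : M, r a c → ∃ b : M, r a b ∧ r b c) :
    (∀ I J : Set M, IsRoundIdeal r I → IsRoundIdeal r J → IsRoundIdeal r (addRI r I J)) ∧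
    (∀ I J : Set M, IsRoundIdeal r I → IsRoundIdeal r J → addRI r I J = addRI r J I) ∧
    (∀ I J K : Set M, IsRoundIdeal r I → IsRoundIdeal r J → IsRoundIdeal r K →
      addRI r (addRI r I J) K = addRI r I (addRI r J K)) := by
  refine ⟨?_, ?_, ?_⟩
  · rintro I J ⟨⟨a, ha⟩, hIlow, hIdir⟩ ⟨⟨b, hb⟩, hJlow, hJdir⟩
    refine ⟨?_, ?_, ?_⟩
    · obtain ⟨a', ha', haa', -⟩ := hIdir a ha a ha
      obtain ⟨b', hb', hbb', -⟩ := hJdir b hb b hb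
      exact ⟨a + b, a', ha', b', hb', hadd _ _ _ _ haa' hbb'⟩
    · rintro x y hxy ⟨a, ha, b, hb, hy⟩
      exact ⟨a, ha, b, hb, htrans _ _ _ hxy hy⟩
    · rintro x ⟨a1, ha1, b1, hb1, hx⟩ y ⟨a2, ha2, b2, hb2, hy⟩
      obtain ⟨a3, ha3, h13, h23⟩ := hIdir a1 ha1 a2 ha2
      obtain ⟨b3, hb3, h13', h23'⟩ := hJdir b1 hb1 b2 hb2
      obtain ⟨a4, ha4, h34, -⟩ := hIdir a3 ha3 a3 ha3
      obtain ⟨b4, hb4, h34', -⟩ := hJdir b3 hb3 b3 hb3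
      refine ⟨a3 + b3, ⟨a4, ha4, b4, hb4, hadd _ _ _ _ h34 h34'⟩,
        htrans _ _ _ hx (hadd _ _ _ _ h13 h13'),
        htrans _ _ _ hy (hadd _ _ _ _ h23 h23')⟩
  · rintro I J - -
    ext x
    constructor
    · rintro ⟨a, ha, b, hb, hx⟩
      exact ⟨b, hb, a, ha, by rwa [add_comm b a]⟩
    · rintro ⟨b, hb, a, ha, hx⟩
      exact ⟨a, ha, b, hb, by rwa [add_comm a b]⟩
  · rintro I J K ⟨-, hIlow, hIdir⟩ ⟨-, hJlow, hJdir⟩ ⟨-, hKlow, hKdir⟩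
    ext x
    constructor
    · rintro ⟨s, ⟨a, ha, b, hb, hs⟩, c, hc, hx⟩
      obtain ⟨c', hc', hcc', -⟩ := hKdir c hc c hc
      obtain ⟨b', hb', hbb', -⟩ := hJdir b hb b hb
      obtain ⟨c'', hc'', hcc'', -⟩ := hKdir c' hc' c' hc'
      refine ⟨a, ha, b + c', ⟨b', hb', c'', hc'', hadd _ _ _ _ hbb' hcc''⟩, ?_⟩
      have := htrans _ _ _ hx (hadd _ _ _ _ hs hcc')
      rwa [add_assoc] at this
    · rintro ⟨a, ha, t, ⟨b, hb, c, hc, ht⟩, hx⟩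
      obtain ⟨a', ha', haa', -⟩ := hIdir a ha a ha
      obtain ⟨b', hb', hbb', -⟩ := hJdir b hb b hb
      obtain ⟨a'', ha'', haa'', -⟩ := hIdir a' ha' a' ha'
      refine ⟨a' + b, ⟨a'', ha'', b', hb', hadd _ _ _ _ haa'' hbb'⟩, c, hc, ?_⟩
      have := htrans _ _ _ hx (hadd _ _ _ _ haa' ht)
      rwa [← add_assoc] at this
end

section
/- Let A be a C*-algebra with Cuntz semigroup Cu(A), and let I be a closed two-sided ideal of A corresponding to the ideal Cu(I) ⊆ Cu(A). If I is singly generated and is a compact element of the complete lattice of closed two-sided ideals of A (i.e., whenever I = sup of an increasing sequence of ideals I_n, then I = I_n for some n), then there exists a positive element e ∈ I that is full in I (generates I as a closed two-sided ideal) and whose Cuntz class [e] is compactly contained in some element of Cu(I), i.e., e belongs to the Pedersen ideal of I. Conversely, if such a full element e ∈ Ped(I)_+ exists, then I is a compact element of the ideal lattice. -/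
open scoped NNReal

variable {A : Type*} [NonUnitalCStarAlgebra A]

/-- The closed two-sided ideal of `A` generated by a single element `a`:
the intersection of all closed two-sided ideals containing `a`. -/
def genClosedIdeal (a : A) : Set A :=
  ⋂₀ {S : Set A | IsClosed S ∧ (∃ J : TwoSidedIdeal A, (J : Set A) = S) ∧ a ∈ S}

/-- `I` is a compact element of the lattice of closed two-sided ideals of `A`:
whenever `I` is the supremum (closure of the union) of an increasing sequence of
closed two-sided ideals, it equals one of them. -/
def CompactIdealSeq (I : TwoSidedIdeal A) : Prop :=
  ∀ J : ℕ → TwoSidedIdeal A, (∀ n, IsClosed ((J n : Set A))) → Monotone J →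
    (I : Set A) = closure (⋃ n, (J n : Set A)) → ∃ n, (I : Set A) = (J n : Set A)

/-- Membership in the Pedersen ideal of the C*-algebra `I` (a closed two-sided ideal
of `A`, regarded as a set): `a` belongs to every dense (two-sided, not necessarily
closed) ideal of `I`. -/
def PedMem (I : Set A) (a : A) : Prop :=
  ∀ J : Set A, J ⊆ I → (0 : A) ∈ J → (∀ x ∈ J, ∀ y ∈ J, x + y ∈ J) →
    (∀ x ∈ J, -x ∈ J) → (∀ x ∈ I, ∀ j ∈ J, x * j ∈ J ∧ j * x ∈ J) →
    I ⊆ closure J → a ∈ J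

/-!
If `I` is generated by `a`, it is also generated by the positive element `b = a⋆a`: a closed
ideal containing `a⋆a` contains `a`, which the C⋆-identity approximates by `a · g(a⋆a)`. The
cut-downs `(b - 1/(n+1))₊` converge to `b`, so the closed ideals they generate increase to `I`,
and compactness makes one of them all of `I`. A cut-down `e = (b - α)₊` has a local unit `v ∈ I`,
`v e = e`, and this puts `e` in every dense ideal `J` of `I`: for `c ∈ J` close to `v`, `c - v`
has a quasi-inverse `s`, and `e = (v + v s)(c e)`.

Conversely, the union of an increasing sequence of closed ideals with closure `I` is a dense ideal
of `I`; it contains a full element of the Pedersen ideal, hence so does one of the ideals.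
-/

namespace TwoSidedIdeal

section Closure

variable {R : Type*} [NonUnitalRing R] [TopologicalSpace R] [IsTopologicalRing R]

def topologicalClosure (J : TwoSidedIdeal R) : TwoSidedIdeal R :=
  .mk' (closure J) (subset_closure J.zero_mem)
    (fun hx hy => map_mem_closure₂ continuous_add hx hy fun _ hx _ hy => J.add_mem hx hy)
    (fun hx => map_mem_closure continuous_neg hx fun _ hx => J.neg_mem hx)
    (fun {x _} hy => map_mem_closure (continuous_const_mul x) hy fun _ hy => J.mul_mem_left x _ hy)
    (fun {_ y} hx => map_mem_closure (f := (· * y)) (continuous_mul_const y) hx fun _ hx =>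
      J.mul_mem_right _ y hx)

@[simp]
lemma coe_topologicalClosure (J : TwoSidedIdeal R) :
    (J.topologicalClosure : Set R) = closure J :=
  coe_mk' _ _ _ _ _ _

end Closure

lemma coe_iSup_of_directed {R ι : Type*} [NonUnitalRing R] [Nonempty ι]
    {J : ι → TwoSidedIdeal R} (hJ : Directed (· ≤ ·) J) :
    ((⨆ i, J i : TwoSidedIdeal R) : Set R) = ⋃ i, (J i : Set R) := by
  let U : TwoSidedIdeal R := .mk' (⋃ i, (J i : Set R))
    (Set.mem_iUnion.2 ⟨Classical.arbitrary ι, (J _).zero_mem⟩)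
    (fun hx hy => by
      obtain ⟨i, hi⟩ := Set.mem_iUnion.1 hx
      obtain ⟨j, hj⟩ := Set.mem_iUnion.1 hy
      obtain ⟨k, hik, hjk⟩ := hJ i j
      exact Set.mem_iUnion.2 ⟨k, (J k).add_mem (hik hi) (hjk hj)⟩)
    (fun hx => by
      obtain ⟨i, hi⟩ := Set.mem_iUnion.1 hx
      exact Set.mem_iUnion.2 ⟨i, (J i).neg_mem hi⟩)
    (fun {x _} hy => by
      obtain ⟨i, hi⟩ := Set.mem_iUnion.1 hy
      exact Set.mem_iUnion.2 ⟨i, (J i).mul_mem_left x _ hi⟩)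
    (fun {_ y} hx => by
      obtain ⟨i, hi⟩ := Set.mem_iUnion.1 hx
      exact Set.mem_iUnion.2 ⟨i, (J i).mul_mem_right _ y hi⟩)
  refine subset_antisymm ?_ (Set.iUnion_subset fun i => le_iff.1 (le_iSup J i))
  have hU : (⨆ i, J i) ≤ U :=
    iSup_le fun i => le_iff.2 fun _ hx => (mem_mk' ..).2 (Set.mem_iUnion.2 ⟨i, hx⟩)
  simpa [U] using le_iff.1 hU

end TwoSidedIdeal

section GenClosedIdeal

def closedIdealSpan (a : A) : TwoSidedIdeal A :=
  (TwoSidedIdeal.span {a}).topologicalClosure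

lemma isClosed_closedIdealSpan (a : A) : IsClosed (closedIdealSpan a : Set A) := by
  rw [closedIdealSpan, TwoSidedIdeal.coe_topologicalClosure]
  exact isClosed_closure

lemma mem_closedIdealSpan_self (a : A) : a ∈ closedIdealSpan a := by
  rw [← SetLike.mem_coe, closedIdealSpan, TwoSidedIdeal.coe_topologicalClosure]
  exact subset_closure (TwoSidedIdeal.subset_span (Set.mem_singleton a))

lemma genClosedIdeal_subset {a : A} {J : TwoSidedIdeal A} (hJ : IsClosed (J : Set A))
    (ha : a ∈ J) : genClosedIdeal a ⊆ J :=
  Set.sInter_subset_of_mem ⟨hJ, ⟨J, rfl⟩, ha⟩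

lemma coe_closedIdealSpan (a : A) : (closedIdealSpan a : Set A) = genClosedIdeal a := by
  refine subset_antisymm (Set.subset_sInter ?_)
    (genClosedIdeal_subset (isClosed_closedIdealSpan a) (mem_closedIdealSpan_self a))
  rintro _ ⟨hS, ⟨J, rfl⟩, ha⟩
  rw [closedIdealSpan, TwoSidedIdeal.coe_topologicalClosure]
  exact closure_minimal (TwoSidedIdeal.span_le.2 (Set.singleton_subset_iff.2 ha)) hS

lemma closedIdealSpan_le {a : A} {J : TwoSidedIdeal A} (hJ : IsClosed (J : Set A))
    (ha : a ∈ J) : closedIdealSpan a ≤ J :=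
  TwoSidedIdeal.le_iff.2 (coe_closedIdealSpan a ▸ genClosedIdeal_subset hJ ha)

lemma mem_genClosedIdeal_self (a : A) : a ∈ genClosedIdeal a :=
  Set.mem_sInter.2 fun _ hS => hS.2.2

lemma genClosedIdeal_subset_genClosedIdeal {a b : A} (h : a ∈ genClosedIdeal b) :
    genClosedIdeal a ⊆ genClosedIdeal b := by
  rw [← coe_closedIdealSpan b] at h ⊢
  exact genClosedIdeal_subset (isClosed_closedIdealSpan b) h

end GenClosedIdeal

namespace TwoSidedIdeal

variable [PartialOrder A] [StarOrderedRing A]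

lemma smul_mem_of_isClosed {𝕜 : Type*} [SMul 𝕜 A] [ContinuousConstSMul 𝕜 A]
    [SMulCommClass 𝕜 A A] {J : TwoSidedIdeal A} (hJ : IsClosed (J : Set A)) (c : 𝕜) {x : A}
    (hx : x ∈ J) : c • x ∈ J := by
  have h := ((CStarAlgebra.increasingApproximateUnit A).tendsto_mul_left x).const_smul c
  refine hJ.mem_of_tendsto h (Filter.Eventually.of_forall fun u => ?_)
  simpa only [SetLike.mem_coe, Function.comp_apply, mul_smul_comm] using
    J.mul_mem_right x (c • u) hx

/-- Closed ideals are not yet known to be self-adjoint, so the functional calculus is run in the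
largest star-subalgebra of `J`. -/
def starCore (J : TwoSidedIdeal A) (hJ : IsClosed (J : Set A)) :
    NonUnitalStarSubalgebra ℝ A where
  carrier := {x | x ∈ J ∧ star x ∈ J}
  add_mem' hx hy := ⟨J.add_mem hx.1 hy.1, by simpa only [star_add] using J.add_mem hx.2 hy.2⟩
  zero_mem' := ⟨J.zero_mem, by simpa only [star_zero] using J.zero_mem⟩
  mul_mem' hx hy := ⟨J.mul_mem_right _ _ hx.1, by
    simpa only [star_mul] using J.mul_mem_right _ (star _) hy.2⟩
  smul_mem' c _ hx := ⟨smul_mem_of_isClosed hJ c hx.1, by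
    simpa only [star_smul, star_trivial] using smul_mem_of_isClosed hJ c hx.2⟩
  star_mem' hx := ⟨hx.2, by simpa only [star_star] using hx.1⟩

lemma isClosed_starCore {J : TwoSidedIdeal A} (hJ : IsClosed (J : Set A)) :
    IsClosed (J.starCore hJ : Set A) :=
  hJ.inter (hJ.preimage continuous_star)

lemma cfcₙ_mem {J : TwoSidedIdeal A} (hJ : IsClosed (J : Set A)) {b : A}
    (hb : IsSelfAdjoint b) (hbJ : b ∈ J) (f : ℝ → ℝ) : cfcₙ f b ∈ J :=
  (_root_.cfcₙ_mem (s := J.starCore hJ) (hs := isClosed_starCore hJ) f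
    ⟨hbJ, by rwa [hb.star_eq]⟩).1

end TwoSidedIdeal

section StarMulSelf

variable [PartialOrder A] [StarOrderedRing A]

/-- The absolute value only makes the function continuous on `ℝ`: on the spectrum of `a⋆a` it is
`t / (t + ε)`, and the C⋆-identity turns the left side into the norm of `t ε² / (t + ε)²`. -/
lemma norm_sub_mul_cfcₙ_sq_le (a : A) {ε : ℝ} (hε : 0 < ε) :
    ‖a - a * cfcₙ (fun t => t / (|t| + ε)) (star a * a)‖ ^ 2 ≤ ε := by
  set b := star a * a
  have hb : 0 ≤ b := star_mul_self_nonneg a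
  set g : ℝ → ℝ := fun t => t / (|t| + ε)
  have hg : Continuous g := continuous_id.div (by fun_prop) fun t => by positivity
  set u := cfcₙ g b
  have hu : IsSelfAdjoint u := cfcₙ_predicate g b
  set w : ℝ → ℝ := fun t => t - t * g t
  have hw : cfcₙ w b = b - b * u := by
    rw [cfcₙ_sub (fun t => t) (fun t => t * g t) b,
      cfcₙ_mul (fun t => t) g b (hg := hg.continuousOn), cfcₙ_id' ℝ b]
  have hstar : star (a - a * u) * (a - a * u) = cfcₙ (fun t => w t - g t * w t) b := by
    have hwc : Continuous w := by fun_prop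
    rw [cfcₙ_sub w (fun t => g t * w t) b hwc.continuousOn (hg := (hg.mul hwc).continuousOn),
      cfcₙ_mul g w b hg.continuousOn (hg := hwc.continuousOn), hw]
    simp only [b, star_sub, star_mul, hu.star_eq]
    noncomm_ring
  rw [sq, ← CStarRing.norm_star_mul_self, hstar]
  refine norm_cfcₙ_le fun t ht => ?_
  have ht0 : 0 ≤ t := quasispectrum_nonneg_of_nonneg b hb t ht
  have hfactor : w t - g t * w t = t * (ε / (t + ε)) ^ 2 := by
    simp only [w, g, abs_of_nonneg ht0]
    field_simp
    ring
  rw [hfactor, Real.norm_of_nonneg (by positivity), div_pow, mul_div_assoc',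
    div_le_iff₀ (by positivity)]
  nlinarith [sq_nonneg t, mul_pos hε hε]

lemma TwoSidedIdeal.mem_of_star_mul_self_mem {J : TwoSidedIdeal A} (hJ : IsClosed (J : Set A))
    {a : A} (h : star a * a ∈ J) : a ∈ J := by
  rw [← SetLike.mem_coe, ← hJ.closure_eq, Metric.mem_closure_iff]
  intro ε hε
  have hu := J.cfcₙ_mem hJ (.star_mul_self a) h fun t => t / (|t| + ε ^ 2 / 2)
  refine ⟨_, J.mul_mem_left a _ hu, ?_⟩
  rw [dist_eq_norm]
  refine lt_of_pow_lt_pow_left₀ 2 hε.le ?_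
  calc _ ≤ ε ^ 2 / 2 := norm_sub_mul_cfcₙ_sq_le a (by positivity)
    _ < ε ^ 2 := by linarith [pow_pos hε 2]

lemma genClosedIdeal_star_mul_self (a : A) : genClosedIdeal (star a * a) = genClosedIdeal a := by
  refine subset_antisymm (genClosedIdeal_subset_genClosedIdeal ?_)
    (genClosedIdeal_subset_genClosedIdeal ?_) <;> rw [← coe_closedIdealSpan, SetLike.mem_coe]
  · exact (closedIdealSpan a).mul_mem_left _ _ (mem_closedIdealSpan_self a)
  · exact TwoSidedIdeal.mem_of_star_mul_self_mem (isClosed_closedIdealSpan _)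
      (mem_closedIdealSpan_self _)

end StarMulSelf

section PosPartSub

/-- `(b - α)₊`. For `α < 0` this is the junk value `0`: the function does not vanish at `0`. -/
noncomputable def posPartSub (b : A) (α : ℝ) : A :=
  cfcₙ (fun t : ℝ => max (t - α) 0) b

lemma posPartSub_posPartSub {b : A} (hb : IsSelfAdjoint b) {α β : ℝ} (hβ : 0 ≤ β)
    (hβα : β ≤ α) : posPartSub (posPartSub b β) (α - β) = posPartSub b α := by
  rw [posPartSub, posPartSub, ← cfcₙ_comp' (fun s => max (s - (α - β)) 0)
    (fun t => max (t - β) 0) b (hg0 := by simpa using hβα) (hf0 := by simpa using hβ)]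
  refine cfcₙ_congr fun t _ => ?_
  rcases le_total t β with htβ | hβt
  · simp [max_eq_right (sub_nonpos.2 htβ), max_eq_right (sub_nonpos.2 (htβ.trans hβα)), hβα]
  · rw [max_eq_left (sub_nonneg.2 hβt)]
    ring_nf

lemma cfcₙ_min_mul_posPartSub (b : A) {α : ℝ} (hα : 0 < α) :
    cfcₙ (fun t => min (t / α) 1) b * posPartSub b α = posPartSub b α := by
  rw [posPartSub, ← cfcₙ_mul (fun t => min (t / α) 1) (fun t => max (t - α) 0) b
    (hg0 := by simpa using hα.le)]
  refine cfcₙ_congr fun t _ => ?_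
  rcases le_total t α with htα | hαt
  · simp [max_eq_right (sub_nonpos.2 htα)]
  · simp [min_eq_right ((one_le_div hα).2 hαt)]

variable [PartialOrder A] [StarOrderedRing A]

lemma posPartSub_nonneg (b : A) (α : ℝ) : 0 ≤ posPartSub b α :=
  cfcₙ_nonneg fun _ _ => le_max_right _ _

lemma norm_sub_posPartSub_le {b : A} (hb : 0 ≤ b) {α : ℝ} (hα : 0 ≤ α) :
    ‖b - posPartSub b α‖ ≤ α := by
  nth_rw 1 [← cfcₙ_id' ℝ b]
  rw [posPartSub,
    ← cfcₙ_sub (fun t => t) (fun t => max (t - α) 0) b (hg0 := by simpa using hα)]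
  refine norm_cfcₙ_le fun t ht => ?_
  have ht0 : 0 ≤ t := quasispectrum_nonneg_of_nonneg b hb t ht
  rw [Real.norm_eq_abs, abs_le]
  constructor <;> cases max_cases (t - α) 0 <;> linarith

end PosPartSub

section Pedersen

lemma isQuasiregular_of_norm_lt_one {r : A} (hr : ‖r‖ < 1) : IsQuasiregular r := by
  rw [isQuasiregular_iff_isUnit' ℂ, ← sub_neg_eq_add]
  exact isUnit_one_sub_of_norm_lt_one (by rwa [norm_neg, Unitization.norm_inr])

lemma pedMem_of_mul_eq_self {I : TwoSidedIdeal A} {v e : A} (hv : v ∈ I) (he : e ∈ I)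
    (hve : v * e = e) : PedMem (I : Set A) e := by
  intro J _ _ _ _ hmul hdense
  obtain ⟨c, hcJ, hcv⟩ := Metric.mem_closure_iff.1 (hdense hv) 1 one_pos
  obtain ⟨s, -, hs⟩ := isQuasiregular_iff.1 <| isQuasiregular_of_norm_lt_one (r := c - v) <| by
    rwa [← dist_eq_norm, dist_comm]
  -- `1 + s` inverts `1 + (c - v)`, and `(1 + (c - v)) e = c e` because `v` is a unit for `e`
  have hcs : c * e + s * (c * e) = e := by
    have h : c * e + s * (c * e) - e =
        (c - v + s + s * (c - v)) * e + (v * e - e) + s * (v * e - e) := by noncomm_ring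
    rwa [hs, hve, sub_self, zero_mul, mul_zero, add_zero, add_zero, sub_eq_zero] at h
  have hvs : v + v * s ∈ I := I.add_mem hv (I.mul_mem_right v s hv)
  have hmem := (hmul _ hvs _ (hmul e he c hcJ).2).1
  rwa [add_mul, mul_assoc, ← mul_add, hcs, hve] at hmem

lemma PedMem.mem {I J : TwoSidedIdeal A} {e : A} (h : PedMem (I : Set A) e) (hJI : J ≤ I)
    (hdense : (I : Set A) ⊆ closure J) : e ∈ J :=
  h J (TwoSidedIdeal.le_iff.1 hJI) J.zero_mem (fun _ hx _ hy => J.add_mem hx hy)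
    (fun _ hx => J.neg_mem hx) (fun x _ _ hj => ⟨J.mul_mem_left x _ hj, J.mul_mem_right _ x hj⟩)
    hdense

lemma pedMem_posPartSub [PartialOrder A] [StarOrderedRing A] {I : TwoSidedIdeal A}
    (hI : IsClosed (I : Set A)) {b : A} (hb : IsSelfAdjoint b) (hbI : b ∈ I) {α : ℝ}
    (hα : 0 < α) : PedMem (I : Set A) (posPartSub b α) :=
  pedMem_of_mul_eq_self (I.cfcₙ_mem hI hb hbI _) (I.cfcₙ_mem hI hb hbI _)
    (cfcₙ_min_mul_posPartSub b hα)

end Pedersen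

section Compact

open Filter Topology

variable [PartialOrder A] [StarOrderedRing A]

lemma closedIdealSpan_posPartSub_le_of_le {b : A} (hb : IsSelfAdjoint b) {α β : ℝ}
    (hβ : 0 ≤ β) (hβα : β ≤ α) :
    closedIdealSpan (posPartSub b α) ≤ closedIdealSpan (posPartSub b β) := by
  refine closedIdealSpan_le (isClosed_closedIdealSpan _) ?_
  rw [← posPartSub_posPartSub hb hβ hβα]
  exact TwoSidedIdeal.cfcₙ_mem (isClosed_closedIdealSpan _)
    (posPartSub_nonneg b β).isSelfAdjoint (mem_closedIdealSpan_self _) _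

lemma mem_closure_iUnion_closedIdealSpan_posPartSub {b : A} (hb : 0 ≤ b) :
    b ∈ closure (⋃ n : ℕ, (closedIdealSpan (posPartSub b (1 / (n + 1))) : Set A)) := by
  have hlim : Tendsto (fun n : ℕ => posPartSub b (1 / (n + 1))) atTop (𝓝 b) := by
    rw [tendsto_iff_norm_sub_tendsto_zero]
    refine squeeze_zero (fun _ => norm_nonneg _) (fun n => ?_)
      tendsto_one_div_add_atTop_nhds_zero_nat
    rw [norm_sub_rev]
    exact norm_sub_posPartSub_le hb (by positivity)
  exact mem_closure_of_tendsto hlim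
    (Eventually.of_forall fun n => Set.mem_iUnion.2 ⟨n, mem_closedIdealSpan_self _⟩)

lemma exists_full_pedMem_of_compactIdealSeq {I : TwoSidedIdeal A} (hI : IsClosed (I : Set A))
    {b : A} (hb : 0 ≤ b) (hgen : genClosedIdeal b = I) (hcomp : CompactIdealSeq I) :
    ∃ e : A, 0 ≤ e ∧ e ∈ I ∧ genClosedIdeal e = I ∧ PedMem (I : Set A) e := by
  set J : ℕ → TwoSidedIdeal A := fun n => closedIdealSpan (posPartSub b (1 / (n + 1)))
  have hbI : b ∈ I := by rw [← SetLike.mem_coe, ← hgen]; exact mem_genClosedIdeal_self b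
  have hJI : ∀ n, J n ≤ I := fun n =>
    closedIdealSpan_le hI (I.cfcₙ_mem hI hb.isSelfAdjoint hbI _)
  have hmono : Monotone J := fun m n hmn =>
    closedIdealSpan_posPartSub_le_of_le hb.isSelfAdjoint (by positivity)
      (one_div_le_one_div_of_le (by positivity) (by gcongr))
  have hdense : (I : Set A) = closure (⋃ n, (J n : Set A)) := by
    refine subset_antisymm ?_
      (closure_minimal (Set.iUnion_subset fun n => TwoSidedIdeal.le_iff.1 (hJI n)) hI)
    set K := (⨆ n, J n).topologicalClosure
    have hK : (K : Set A) = closure (⋃ n, (J n : Set A)) := by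
      rw [TwoSidedIdeal.coe_topologicalClosure,
        TwoSidedIdeal.coe_iSup_of_directed hmono.directed_le]
    have hbK : b ∈ K := by
      rw [← SetLike.mem_coe, hK]
      exact mem_closure_iUnion_closedIdealSpan_posPartSub hb
    rw [← hgen, ← hK]
    exact genClosedIdeal_subset (hK ▸ isClosed_closure) hbK
  obtain ⟨n, hn⟩ := hcomp J (fun n => isClosed_closedIdealSpan _) hmono hdense
  refine ⟨_, posPartSub_nonneg _ _, ?_, by rw [hn, coe_closedIdealSpan],
    pedMem_posPartSub hI hb.isSelfAdjoint hbI (by positivity)⟩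
  rw [← SetLike.mem_coe, hn]
  exact mem_closedIdealSpan_self _

end Compact

lemma compactIdealSeq_of_pedMem {I : TwoSidedIdeal A} {e : A} (hgen : genClosedIdeal e = I)
    (hped : PedMem (I : Set A) e) : CompactIdealSeq I := by
  intro J hJ hmono hI
  have hJI : ∀ n, J n ≤ I := fun n => TwoSidedIdeal.le_iff.2 <| hI ▸
    (Set.subset_iUnion (fun k => (J k : Set A)) n).trans subset_closure
  have hU := TwoSidedIdeal.coe_iSup_of_directed hmono.directed_le
  have he : e ∈ ⨆ n, J n := hped.mem (iSup_le hJI) (by rw [hU, ← hI])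
  rw [← SetLike.mem_coe, hU] at he
  obtain ⟨n, hn⟩ := Set.mem_iUnion.1 he
  exact ⟨n, subset_antisymm (hgen ▸ genClosedIdeal_subset (hJ n) hn)
    (TwoSidedIdeal.le_iff.1 (hJI n))⟩

theorem compact_singly_generated_iff_full_pedersen_element
    [PartialOrder A] [StarOrderedRing A]
    (I : TwoSidedIdeal A) (hIc : IsClosed (I : Set A)) :
    ((∃ a : A, genClosedIdeal a = (I : Set A)) ∧ CompactIdealSeq I →
      ∃ e : A, 0 ≤ e ∧ e ∈ I ∧ genClosedIdeal e = (I : Set A) ∧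
        PedMem (I : Set A) e) ∧
    ((∃ e : A, 0 ≤ e ∧ e ∈ I ∧ genClosedIdeal e = (I : Set A) ∧
        PedMem (I : Set A) e) → CompactIdealSeq I) := by
  refine ⟨fun ⟨⟨a, ha⟩, hcomp⟩ => ?_, fun ⟨e, _, _, hgen, hped⟩ =>
    compactIdealSeq_of_pedMem hgen hped⟩
  exact exists_full_pedMem_of_compactIdealSeq hIc (star_mul_self_nonneg a)
    ((genClosedIdeal_star_mul_self a).trans ha) hcomp
end
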